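/- arXiv:2007.04692 — 5 statements merged into one kernel-verified Lean document; each statement's English description precedes it below -/
import Mathlib

section
/- Let n₁, n₂, n₃ be integers with |n_j| ≥ 3 for j = 1, 2, 3 and n₁ + n₂ + n₃ = 0. Then |λ(n₁) + λ(n₂) + λ(n₃)| > 2/5. In particular there are no 3-wave resonances: λ(n₁) + λ(n₂) + λ(n₃) ≠ 0. -/
/-- The dispersion relation λ(n) = sgn(n)·(1 + 3/(n² − 4)) for |n| ≥ 3. -/
noncomputable def lam (n : ℤ) : ℝ :=
  if 3 ≤ |n| then (Int.sign n : ℝ) * (1 + 3 / ((n : ℝ) ^ 2 - 4)) else 0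

lemma lam_neg (n : ℤ) : lam (-n) = - lam n := by
  unfold lam
  rw [abs_neg, Int.sign_neg]
  split_ifs with h
  · push_cast; ring
  · simp

lemma lam_ge_one (a : ℤ) (ha : 3 ≤ a) : 1 ≤ lam a := by
  have h0 : 0 < a := by omega
  have hcond : 3 ≤ |a| := le_trans ha (le_abs_self a)
  simp only [lam, if_pos hcond, Int.sign_eq_one_iff_pos.mpr h0]
  have haR : (3:ℝ) ≤ (a:ℝ) := by exact_mod_cast ha
  have hpos : (0:ℝ) < (a:ℝ)^2 - 4 := by nlinarith
  have hnn : 0 ≤ 3 / ((a:ℝ)^2 - 4) := by positivity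
  push_cast
  linarith

lemma lam_le (c : ℤ) (hc : 6 ≤ c) : lam c ≤ 1 + 3/32 := by
  have h0 : 0 < c := by omega
  have hcond : 3 ≤ |c| := le_trans (by omega) (le_abs_self c)
  simp only [lam, if_pos hcond, Int.sign_eq_one_iff_pos.mpr h0]
  have hcR : (6:ℝ) ≤ (c:ℝ) := by exact_mod_cast hc
  have hpos : (0:ℝ) < (c:ℝ)^2 - 4 := by nlinarith
  have h32 : (32:ℝ) ≤ (c:ℝ)^2 - 4 := by nlinarith
  have : 3 / ((c:ℝ)^2 - 4) ≤ 3 / 32 := by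
    apply div_le_div_of_nonneg_left (by norm_num) (by norm_num) h32
  push_cast
  linarith

lemma key (a b : ℤ) (ha : 3 ≤ a) (hb : 3 ≤ b) :
    2/5 < lam a + lam b - lam (a + b) := by
  have h1 := lam_ge_one a ha
  have h2 := lam_ge_one b hb
  have h3 := lam_le (a + b) (by omega)
  linarith

/-- No 3-wave resonances: if |n_j| ≥ 3 and n₁+n₂+n₃ = 0 then
|λ(n₁)+λ(n₂)+λ(n₃)| > 2/5; in particular the sum is nonzero. -/
theorem stmt4 (n₁ n₂ n₃ : ℤ) (h1 : 3 ≤ |n₁|) (h2 : 3 ≤ |n₂|) (h3 : 3 ≤ |n₃|)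
    (hsum : n₁ + n₂ + n₃ = 0) :
    2 / 5 < |lam n₁ + lam n₂ + lam n₃| ∧ lam n₁ + lam n₂ + lam n₃ ≠ 0 := by
  have h1' : n₁ ≤ -3 ∨ 3 ≤ n₁ := by
    rcases abs_cases n₁ with ⟨he, _⟩ | ⟨he, _⟩ <;> rw [he] at h1 <;> omega
  have h2' : n₂ ≤ -3 ∨ 3 ≤ n₂ := by
    rcases abs_cases n₂ with ⟨he, _⟩ | ⟨he, _⟩ <;> rw [he] at h2 <;> omega
  have h3' : n₃ ≤ -3 ∨ 3 ≤ n₃ := by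
    rcases abs_cases n₃ with ⟨he, _⟩ | ⟨he, _⟩ <;> rw [he] at h3 <;> omega
  have habs : 2 / 5 < |lam n₁ + lam n₂ + lam n₃| := by
    have e1 : lam n₁ = -lam (-n₁) := by rw [lam_neg]; ring
    have e2 : lam n₂ = -lam (-n₂) := by rw [lam_neg]; ring
    have e3 : lam n₃ = -lam (-n₃) := by rw [lam_neg]; ring
    rcases h1' with hn1 | hn1 <;> rcases h2' with hn2 | hn2 <;>
      rcases h3' with hn3 | hn3
    · omega
    · -- n₁,n₂ neg, n₃ pos : -n₃ = n₁ + n₂, use key on -n₁,-n₂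
      have hk := key (-n₁) (-n₂) (by omega) (by omega)
      have he : lam (-n₁ + -n₂) = lam n₃ := by congr 1; omega
      have : 2/5 < -(lam n₁ + lam n₂ + lam n₃) := by
        rw [e1, e2]; linarith
      calc 2/5 < -(lam n₁ + lam n₂ + lam n₃) := this
        _ ≤ |lam n₁ + lam n₂ + lam n₃| := neg_le_abs _
    · have hk := key (-n₁) (-n₃) (by omega) (by omega)
      have he : lam (-n₁ + -n₃) = lam n₂ := by congr 1; omega
      have : 2/5 < -(lam n₁ + lam n₂ + lam n₃) := by
        rw [e1, e3]; linarith
      calc 2/5 < -(lam n₁ + lam n₂ + lam n₃) := this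
        _ ≤ |lam n₁ + lam n₂ + lam n₃| := neg_le_abs _
    · have hk := key n₂ n₃ (by omega) (by omega)
      have he : n₁ = -(n₂ + n₃) := by omega
      have : 2/5 < lam n₁ + lam n₂ + lam n₃ := by
        rw [he, lam_neg]; linarith
      calc 2/5 < lam n₁ + lam n₂ + lam n₃ := this
        _ ≤ |lam n₁ + lam n₂ + lam n₃| := le_abs_self _
    · have hk := key (-n₂) (-n₃) (by omega) (by omega)
      have he : lam (-n₂ + -n₃) = lam n₁ := by congr 1; omega
      have : 2/5 < -(lam n₁ + lam n₂ + lam n₃) := by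
        rw [e2, e3]; linarith
      calc 2/5 < -(lam n₁ + lam n₂ + lam n₃) := this
        _ ≤ |lam n₁ + lam n₂ + lam n₃| := neg_le_abs _
    · have hk := key n₁ n₃ (by omega) (by omega)
      have he : n₂ = -(n₁ + n₃) := by omega
      have : 2/5 < lam n₁ + lam n₂ + lam n₃ := by
        rw [he, lam_neg]; linarith
      calc 2/5 < lam n₁ + lam n₂ + lam n₃ := this
        _ ≤ |lam n₁ + lam n₂ + lam n₃| := le_abs_self _
    · have hk := key n₁ n₂ (by omega) (by omega)
      have he : n₃ = -(n₁ + n₂) := by omega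
      have : 2/5 < lam n₁ + lam n₂ + lam n₃ := by
        rw [he, lam_neg]; linarith
      calc 2/5 < lam n₁ + lam n₂ + lam n₃ := this
        _ ≤ |lam n₁ + lam n₂ + lam n₃| := le_abs_self _
    · omega
  refine ⟨habs, fun h => ?_⟩
  rw [h] at habs
  simp at habs
  linarith
end

section
/- Let n₁, …, n₅ be integers with |n_j| ≥ 3 for j = 1, …, 5 and n₁ + ⋯ + n₅ = 0. Then |λ(n₁) + λ(n₂) + λ(n₃) + λ(n₄) + λ(n₅)| > 9/35. In particular there are no 5-wave resonances: λ(n₁) + ⋯ + λ(n₅) ≠ 0. -/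
lemma lam_eq (n : ℤ) : lam n = - lam (-n) := by rw [lam_neg, neg_neg]

lemma lam_of_pos (n : ℤ) (h : 3 ≤ n) : lam n = 1 + 3 / ((n : ℝ) ^ 2 - 4) := by
  unfold lam
  rw [if_pos (by rwa [abs_of_pos (by omega)]), Int.sign_eq_one_of_pos (by omega)]
  norm_num

lemma lam_ge_one_s5 (n : ℤ) (h : 3 ≤ n) : 1 < lam n := by
  rw [lam_of_pos n h]
  have hn : (3:ℝ) ≤ (n:ℝ) := by exact_mod_cast h
  have h1 : (0:ℝ) < (n:ℝ)^2 - 4 := by nlinarith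
  have : 0 < 3 / ((n:ℝ)^2 - 4) := by positivity
  linarith

lemma lam_le_bound (n k : ℤ) (h3 : 3 ≤ k) (h : k ≤ n) : lam n ≤ 1 + 3 / ((k : ℝ) ^ 2 - 4) := by
  have hk : (3:ℝ) ≤ (k:ℝ) := by exact_mod_cast h3
  have hn : ((k:ℝ)) ≤ (n:ℝ) := by exact_mod_cast h
  rw [lam_of_pos n (le_trans h3 h)]
  have h1 : (0:ℝ) < (k:ℝ)^2 - 4 := by nlinarith
  have h2 : (0:ℝ) < (n:ℝ)^2 - 4 := by nlinarith
  have h3' : 3 / ((n:ℝ)^2 - 4) ≤ 3 / ((k:ℝ)^2 - 4) := by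
    apply div_le_div_of_nonneg_left (by norm_num) h1
    nlinarith
  linarith

lemma lam_le85 (n : ℤ) (h : 3 ≤ n) : lam n ≤ 8/5 := by
  have := lam_le_bound n 3 le_rfl h
  norm_num at this
  linarith

lemma pairBound (p q : ℤ) (hp : 3 ≤ p) (hq : 3 ≤ q) (hs : 9 ≤ p + q) :
    lam p + lam q ≤ 431/160 := by
  rcases (show p = 3 ∨ p = 4 ∨ 5 ≤ p by omega) with rfl | rfl | hp5
  · have hq6 : (6:ℤ) ≤ q := by omega
    have b1 := lam_le_bound 3 3 le_rfl le_rfl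
    have b2 := lam_le_bound q 6 (by norm_num) hq6
    norm_num at b1 b2 ⊢
    linarith
  · have hq5 : (5:ℤ) ≤ q := by omega
    have b1 := lam_le_bound 4 4 (by norm_num) le_rfl
    have b2 := lam_le_bound q 5 (by norm_num) hq5
    norm_num at b1 b2 ⊢
    linarith
  · rcases (show q = 3 ∨ q = 4 ∨ 5 ≤ q by omega) with rfl | rfl | hq5
    · have hp6 : (6:ℤ) ≤ p := by omega
      have b1 := lam_le_bound 3 3 le_rfl le_rfl
      have b2 := lam_le_bound p 6 (by norm_num) hp6
      norm_num at b1 b2 ⊢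
      linarith
    · have b1 := lam_le_bound 4 4 (by norm_num) le_rfl
      have b2 := lam_le_bound p 5 (by norm_num) hp5
      norm_num at b1 b2 ⊢
      linarith
    · have b1 := lam_le_bound p 5 (by norm_num) hp5
      have b2 := lam_le_bound q 5 (by norm_num) hq5
      norm_num at b1 b2 ⊢
      linarith

lemma finish_pos {S : ℝ} (h : 49/160 ≤ S) : 9/35 < |S| ∧ S ≠ 0 := by
  constructor
  · calc (9:ℝ)/35 < 49/160 := by norm_num
      _ ≤ S := h
      _ ≤ |S| := le_abs_self S
  · intro h0; rw [h0] at h; norm_num at h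

lemma finish_neg {S : ℝ} (h : S ≤ -(49/160)) : 9/35 < |S| ∧ S ≠ 0 := by
  constructor
  · calc (9:ℝ)/35 < 49/160 := by norm_num
      _ ≤ -S := by linarith
      _ ≤ |S| := neg_le_abs S
  · intro h0; rw [h0] at h; norm_num at h

/-- No 5-wave resonances: if |n_j| ≥ 3 and n₁+⋯+n₅ = 0 then
|λ(n₁)+⋯+λ(n₅)| > 9/35; in particular the sum is nonzero. -/
theorem stmt5 (n₁ n₂ n₃ n₄ n₅ : ℤ) (h1 : 3 ≤ |n₁|) (h2 : 3 ≤ |n₂|) (h3 : 3 ≤ |n₃|)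
    (h4 : 3 ≤ |n₄|) (h5 : 3 ≤ |n₅|) (hsum : n₁ + n₂ + n₃ + n₄ + n₅ = 0) :
    9 / 35 < |lam n₁ + lam n₂ + lam n₃ + lam n₄ + lam n₅| ∧
    lam n₁ + lam n₂ + lam n₃ + lam n₄ + lam n₅ ≠ 0 := by
  rcases le_abs.mp h1 with hp0 | hn0
  · rcases le_abs.mp h2 with hp1 | hn1
    · rcases le_abs.mp h3 with hp2 | hn2
      · rcases le_abs.mp h4 with hp3 | hn3
        · rcases le_abs.mp h5 with hp4 | hn4
          · exfalso; omega
          · rw [lam_eq n₅]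
            have b0 := lam_ge_one_s5 n₁ hp0
            have b1 := lam_ge_one_s5 n₂ hp1
            have b2 := lam_ge_one_s5 n₃ hp2
            have b3 := lam_ge_one_s5 n₄ hp3
            have bn := lam_le85 (-n₅) hn4
            exact finish_pos (by linarith)
        · rcases le_abs.mp h5 with hp4 | hn4
          · rw [lam_eq n₄]
            have b0 := lam_ge_one_s5 n₁ hp0
            have b1 := lam_ge_one_s5 n₂ hp1
            have b2 := lam_ge_one_s5 n₃ hp2
            have b4 := lam_ge_one_s5 n₅ hp4
            have bn := lam_le85 (-n₄) hn3
            exact finish_pos (by linarith)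
          · rw [lam_eq n₄, lam_eq n₅]
            have b0 := lam_ge_one_s5 n₁ hp0
            have b1 := lam_ge_one_s5 n₂ hp1
            have b2 := lam_ge_one_s5 n₃ hp2
            have bp := pairBound (-n₄) (-n₅) hn3 hn4 (by omega)
            exact finish_pos (by linarith)
      · rcases le_abs.mp h4 with hp3 | hn3
        · rcases le_abs.mp h5 with hp4 | hn4
          · rw [lam_eq n₃]
            have b0 := lam_ge_one_s5 n₁ hp0
            have b1 := lam_ge_one_s5 n₂ hp1
            have b3 := lam_ge_one_s5 n₄ hp3
            have b4 := lam_ge_one_s5 n₅ hp4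
            have bn := lam_le85 (-n₃) hn2
            exact finish_pos (by linarith)
          · rw [lam_eq n₃, lam_eq n₅]
            have b0 := lam_ge_one_s5 n₁ hp0
            have b1 := lam_ge_one_s5 n₂ hp1
            have b3 := lam_ge_one_s5 n₄ hp3
            have bp := pairBound (-n₃) (-n₅) hn2 hn4 (by omega)
            exact finish_pos (by linarith)
        · rcases le_abs.mp h5 with hp4 | hn4
          · rw [lam_eq n₃, lam_eq n₄]
            have b0 := lam_ge_one_s5 n₁ hp0
            have b1 := lam_ge_one_s5 n₂ hp1
            have b4 := lam_ge_one_s5 n₅ hp4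
            have bp := pairBound (-n₃) (-n₄) hn2 hn3 (by omega)
            exact finish_pos (by linarith)
          · rw [lam_eq n₃, lam_eq n₄, lam_eq n₅]
            have b2 := lam_ge_one_s5 (-n₃) hn2
            have b3 := lam_ge_one_s5 (-n₄) hn3
            have b4 := lam_ge_one_s5 (-n₅) hn4
            have bp := pairBound n₁ n₂ hp0 hp1 (by omega)
            exact finish_neg (by linarith)
    · rcases le_abs.mp h3 with hp2 | hn2
      · rcases le_abs.mp h4 with hp3 | hn3
        · rcases le_abs.mp h5 with hp4 | hn4
          · rw [lam_eq n₂]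
            have b0 := lam_ge_one_s5 n₁ hp0
            have b2 := lam_ge_one_s5 n₃ hp2
            have b3 := lam_ge_one_s5 n₄ hp3
            have b4 := lam_ge_one_s5 n₅ hp4
            have bn := lam_le85 (-n₂) hn1
            exact finish_pos (by linarith)
          · rw [lam_eq n₂, lam_eq n₅]
            have b0 := lam_ge_one_s5 n₁ hp0
            have b2 := lam_ge_one_s5 n₃ hp2
            have b3 := lam_ge_one_s5 n₄ hp3
            have bp := pairBound (-n₂) (-n₅) hn1 hn4 (by omega)
            exact finish_pos (by linarith)
        · rcases le_abs.mp h5 with hp4 | hn4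
          · rw [lam_eq n₂, lam_eq n₄]
            have b0 := lam_ge_one_s5 n₁ hp0
            have b2 := lam_ge_one_s5 n₃ hp2
            have b4 := lam_ge_one_s5 n₅ hp4
            have bp := pairBound (-n₂) (-n₄) hn1 hn3 (by omega)
            exact finish_pos (by linarith)
          · rw [lam_eq n₂, lam_eq n₄, lam_eq n₅]
            have b1 := lam_ge_one_s5 (-n₂) hn1
            have b3 := lam_ge_one_s5 (-n₄) hn3
            have b4 := lam_ge_one_s5 (-n₅) hn4
            have bp := pairBound n₁ n₃ hp0 hp2 (by omega)
            exact finish_neg (by linarith)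
      · rcases le_abs.mp h4 with hp3 | hn3
        · rcases le_abs.mp h5 with hp4 | hn4
          · rw [lam_eq n₂, lam_eq n₃]
            have b0 := lam_ge_one_s5 n₁ hp0
            have b3 := lam_ge_one_s5 n₄ hp3
            have b4 := lam_ge_one_s5 n₅ hp4
            have bp := pairBound (-n₂) (-n₃) hn1 hn2 (by omega)
            exact finish_pos (by linarith)
          · rw [lam_eq n₂, lam_eq n₃, lam_eq n₅]
            have b1 := lam_ge_one_s5 (-n₂) hn1
            have b2 := lam_ge_one_s5 (-n₃) hn2
            have b4 := lam_ge_one_s5 (-n₅) hn4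
            have bp := pairBound n₁ n₄ hp0 hp3 (by omega)
            exact finish_neg (by linarith)
        · rcases le_abs.mp h5 with hp4 | hn4
          · rw [lam_eq n₂, lam_eq n₃, lam_eq n₄]
            have b1 := lam_ge_one_s5 (-n₂) hn1
            have b2 := lam_ge_one_s5 (-n₃) hn2
            have b3 := lam_ge_one_s5 (-n₄) hn3
            have bp := pairBound n₁ n₅ hp0 hp4 (by omega)
            exact finish_neg (by linarith)
          · rw [lam_eq n₂, lam_eq n₃, lam_eq n₄, lam_eq n₅]
            have b1 := lam_ge_one_s5 (-n₂) hn1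
            have b2 := lam_ge_one_s5 (-n₃) hn2
            have b3 := lam_ge_one_s5 (-n₄) hn3
            have b4 := lam_ge_one_s5 (-n₅) hn4
            have bp := lam_le85 n₁ hp0
            exact finish_neg (by linarith)
  · rcases le_abs.mp h2 with hp1 | hn1
    · rcases le_abs.mp h3 with hp2 | hn2
      · rcases le_abs.mp h4 with hp3 | hn3
        · rcases le_abs.mp h5 with hp4 | hn4
          · rw [lam_eq n₁]
            have b1 := lam_ge_one_s5 n₂ hp1
            have b2 := lam_ge_one_s5 n₃ hp2
            have b3 := lam_ge_one_s5 n₄ hp3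
            have b4 := lam_ge_one_s5 n₅ hp4
            have bn := lam_le85 (-n₁) hn0
            exact finish_pos (by linarith)
          · rw [lam_eq n₁, lam_eq n₅]
            have b1 := lam_ge_one_s5 n₂ hp1
            have b2 := lam_ge_one_s5 n₃ hp2
            have b3 := lam_ge_one_s5 n₄ hp3
            have bp := pairBound (-n₁) (-n₅) hn0 hn4 (by omega)
            exact finish_pos (by linarith)
        · rcases le_abs.mp h5 with hp4 | hn4
          · rw [lam_eq n₁, lam_eq n₄]
            have b1 := lam_ge_one_s5 n₂ hp1
            have b2 := lam_ge_one_s5 n₃ hp2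
            have b4 := lam_ge_one_s5 n₅ hp4
            have bp := pairBound (-n₁) (-n₄) hn0 hn3 (by omega)
            exact finish_pos (by linarith)
          · rw [lam_eq n₁, lam_eq n₄, lam_eq n₅]
            have b0 := lam_ge_one_s5 (-n₁) hn0
            have b3 := lam_ge_one_s5 (-n₄) hn3
            have b4 := lam_ge_one_s5 (-n₅) hn4
            have bp := pairBound n₂ n₃ hp1 hp2 (by omega)
            exact finish_neg (by linarith)
      · rcases le_abs.mp h4 with hp3 | hn3
        · rcases le_abs.mp h5 with hp4 | hn4
          · rw [lam_eq n₁, lam_eq n₃]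
            have b1 := lam_ge_one_s5 n₂ hp1
            have b3 := lam_ge_one_s5 n₄ hp3
            have b4 := lam_ge_one_s5 n₅ hp4
            have bp := pairBound (-n₁) (-n₃) hn0 hn2 (by omega)
            exact finish_pos (by linarith)
          · rw [lam_eq n₁, lam_eq n₃, lam_eq n₅]
            have b0 := lam_ge_one_s5 (-n₁) hn0
            have b2 := lam_ge_one_s5 (-n₃) hn2
            have b4 := lam_ge_one_s5 (-n₅) hn4
            have bp := pairBound n₂ n₄ hp1 hp3 (by omega)
            exact finish_neg (by linarith)
        · rcases le_abs.mp h5 with hp4 | hn4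
          · rw [lam_eq n₁, lam_eq n₃, lam_eq n₄]
            have b0 := lam_ge_one_s5 (-n₁) hn0
            have b2 := lam_ge_one_s5 (-n₃) hn2
            have b3 := lam_ge_one_s5 (-n₄) hn3
            have bp := pairBound n₂ n₅ hp1 hp4 (by omega)
            exact finish_neg (by linarith)
          · rw [lam_eq n₁, lam_eq n₃, lam_eq n₄, lam_eq n₅]
            have b0 := lam_ge_one_s5 (-n₁) hn0
            have b2 := lam_ge_one_s5 (-n₃) hn2
            have b3 := lam_ge_one_s5 (-n₄) hn3
            have b4 := lam_ge_one_s5 (-n₅) hn4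
            have bp := lam_le85 n₂ hp1
            exact finish_neg (by linarith)
    · rcases le_abs.mp h3 with hp2 | hn2
      · rcases le_abs.mp h4 with hp3 | hn3
        · rcases le_abs.mp h5 with hp4 | hn4
          · rw [lam_eq n₁, lam_eq n₂]
            have b2 := lam_ge_one_s5 n₃ hp2
            have b3 := lam_ge_one_s5 n₄ hp3
            have b4 := lam_ge_one_s5 n₅ hp4
            have bp := pairBound (-n₁) (-n₂) hn0 hn1 (by omega)
            exact finish_pos (by linarith)
          · rw [lam_eq n₁, lam_eq n₂, lam_eq n₅]
            have b0 := lam_ge_one_s5 (-n₁) hn0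
            have b1 := lam_ge_one_s5 (-n₂) hn1
            have b4 := lam_ge_one_s5 (-n₅) hn4
            have bp := pairBound n₃ n₄ hp2 hp3 (by omega)
            exact finish_neg (by linarith)
        · rcases le_abs.mp h5 with hp4 | hn4
          · rw [lam_eq n₁, lam_eq n₂, lam_eq n₄]
            have b0 := lam_ge_one_s5 (-n₁) hn0
            have b1 := lam_ge_one_s5 (-n₂) hn1
            have b3 := lam_ge_one_s5 (-n₄) hn3
            have bp := pairBound n₃ n₅ hp2 hp4 (by omega)
            exact finish_neg (by linarith)
          · rw [lam_eq n₁, lam_eq n₂, lam_eq n₄, lam_eq n₅]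
            have b0 := lam_ge_one_s5 (-n₁) hn0
            have b1 := lam_ge_one_s5 (-n₂) hn1
            have b3 := lam_ge_one_s5 (-n₄) hn3
            have b4 := lam_ge_one_s5 (-n₅) hn4
            have bp := lam_le85 n₃ hp2
            exact finish_neg (by linarith)
      · rcases le_abs.mp h4 with hp3 | hn3
        · rcases le_abs.mp h5 with hp4 | hn4
          · rw [lam_eq n₁, lam_eq n₂, lam_eq n₃]
            have b0 := lam_ge_one_s5 (-n₁) hn0
            have b1 := lam_ge_one_s5 (-n₂) hn1
            have b2 := lam_ge_one_s5 (-n₃) hn2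
            have bp := pairBound n₄ n₅ hp3 hp4 (by omega)
            exact finish_neg (by linarith)
          · rw [lam_eq n₁, lam_eq n₂, lam_eq n₃, lam_eq n₅]
            have b0 := lam_ge_one_s5 (-n₁) hn0
            have b1 := lam_ge_one_s5 (-n₂) hn1
            have b2 := lam_ge_one_s5 (-n₃) hn2
            have b4 := lam_ge_one_s5 (-n₅) hn4
            have bp := lam_le85 n₄ hp3
            exact finish_neg (by linarith)
        · rcases le_abs.mp h5 with hp4 | hn4
          · rw [lam_eq n₁, lam_eq n₂, lam_eq n₃, lam_eq n₄]
            have b0 := lam_ge_one_s5 (-n₁) hn0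
            have b1 := lam_ge_one_s5 (-n₂) hn1
            have b2 := lam_ge_one_s5 (-n₃) hn2
            have b3 := lam_ge_one_s5 (-n₄) hn3
            have bp := lam_le85 n₅ hp4
            exact finish_neg (by linarith)
          · exfalso; omega
end

section
/- There exists a constant c > 0 such that the following holds. Let n₁, n₂, n₃, n₄ be integers with |n_j| ≥ 3 for j = 1,…,4 and n₁ + n₂ + n₃ + n₄ = 0, and suppose the tuple (n₁, n₂, n₃, n₄) is not totally degenerate, i.e., it is not a permutation of a tuple of the form (k, −k, l, −l) with k, l ∈ ℤ. Then |λ(n₁) + λ(n₂) + λ(n₃) + λ(n₄)| ≥ c·min(|n₁|, |n₂|, |n₃|, |n₄|)^{−4}. -/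
set_option maxHeartbeats 1000000

/-- A 4-tuple is totally degenerate if it is a permutation of (k, −k, l, −l). -/
def TotallyDegenerate (n₁ n₂ n₃ n₄ : ℤ) : Prop :=
  ∃ k l : ℤ, ({n₁, n₂, n₃, n₄} : Multiset ℤ) = ({k, -k, l, -l} : Multiset ℤ)

noncomputable def lamP (n : ℤ) : ℝ := 1 + 3 / ((n : ℝ) ^ 2 - 4)

lemma lam_of_pos_s6 {n : ℤ} (h : 3 ≤ n) : lam n = lamP n := by
  rw [lam, if_pos (le_abs.mpr (Or.inl h)), Int.sign_eq_one_of_pos (by omega)]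
  simp [lamP]

lemma lam_of_neg {n : ℤ} (h : n ≤ -3) : lam n = -lamP (-n) := by
  rw [lam, if_pos (le_abs.mpr (Or.inr (by omega))), Int.sign_eq_neg_one_of_neg (by omega)]
  push_cast [lamP]
  ring

lemma swap12 (a b c d : ℤ) : ({a,b,c,d} : Multiset ℤ) = {b,a,c,d} := by
  simp only [Multiset.insert_eq_cons]
  exact Multiset.cons_swap a b _

lemma swap23 (a b c d : ℤ) : ({a,b,c,d} : Multiset ℤ) = {a,c,b,d} := by
  simp only [Multiset.insert_eq_cons]
  exact congrArg _ (Multiset.cons_swap b c _)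

lemma swap34 (a b c d : ℤ) : ({a,b,c,d} : Multiset ℤ) = {a,b,d,c} := by
  simp only [Multiset.insert_eq_cons]
  exact congrArg _ (congrArg _ (Multiset.cons_swap c d _))

lemma td_congr {a b c d a' b' c' d' : ℤ}
    (h : ({a,b,c,d} : Multiset ℤ) = ({a',b',c',d'} : Multiset ℤ)) :
    TotallyDegenerate a' b' c' d' → TotallyDegenerate a b c d :=
  fun ⟨k, l, h'⟩ => ⟨k, l, h.trans h'⟩

lemma degen_of (p q r s : ℤ) (hsum : p + q = r + s) (hprod : p * q = r * s) :
    (r = p ∧ s = q) ∨ (r = q ∧ s = p) := by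
  have h : (r - p) * (r - q) = 0 := by linear_combination hprod - r * hsum
  rcases mul_eq_zero.mp h with h | h
  · left; constructor <;> omega
  · right; constructor <;> omega

lemma lamP_ge_one {n : ℤ} (h : 3 ≤ n) : 1 ≤ lamP n := by
  have h3 : (3:ℝ) ≤ (n:ℝ) := by exact_mod_cast h
  have hd : (0:ℝ) < (n:ℝ)^2 - 4 := by nlinarith
  simp only [lamP]
  nlinarith [div_nonneg (by norm_num : (0:ℝ) ≤ 3) hd.le]

lemma lamP_le_two {n : ℤ} (h : 9 ≤ n) : lamP n ≤ 2 := by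
  have h9 : (9:ℝ) ≤ (n:ℝ) := by exact_mod_cast h
  have hd : (77:ℝ) ≤ (n:ℝ)^2 - 4 := by nlinarith
  have h1 : 3/((n:ℝ)^2-4) ≤ 1 := by rw [div_le_one (by linarith)]; linarith
  simp only [lamP]; linarith

lemma helper_unb (p q r : ℤ) (hp : 3 ≤ p) (hq : 3 ≤ q) (hr : 3 ≤ r) :
    1 ≤ lamP p + lamP q + lamP r - lamP (p+q+r) := by
  have := lamP_ge_one hp
  have := lamP_ge_one hq
  have := lamP_ge_one hr
  have := lamP_le_two (by omega : 9 ≤ p+q+r)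
  linarith

lemma easy_bound (m : ℤ) (hm : 3 ≤ m) (x : ℝ) (hx : 1 ≤ x) :
    (1/100:ℝ) * ((m:ℝ))⁻¹ ^ 4 ≤ x := by
  have h1 : (1:ℝ) ≤ (m:ℝ) := by exact_mod_cast (by omega : (1:ℤ) ≤ m)
  have h2 : ((m:ℝ))⁻¹ ≤ 1 := inv_le_one_of_one_le₀ h1
  have h3 : (0:ℝ) ≤ ((m:ℝ))⁻¹ := inv_nonneg.mpr (by linarith)
  have h4 : ((m:ℝ))⁻¹ ^ 4 ≤ 1 := pow_le_one₀ h3 h2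
  nlinarith

lemma real_id (P Q R S : ℝ) (h1 : P^2 - 4 ≠ 0) (h2 : Q^2-4 ≠ 0) (h3 : R^2-4 ≠ 0) (h4 : S^2-4 ≠ 0)
    (hS : S = P + Q - R) :
    (1 + 3/(P^2-4)) + (1+3/(Q^2-4)) - (1+3/(R^2-4)) - (1+3/(S^2-4)) =
      3*((R-P)*((Q-R)*(((P+Q)^2-8)*(P*Q+R*S) - 2*(P*Q)*(R*S) - 32))) /
        ((P^2-4)*(Q^2-4)*(R^2-4)*(S^2-4)) := by
  subst hS; field_simp; ring

lemma key_sorted (p q r s : ℤ) (hp : 3 ≤ p) (hpr : p < r) (hrs : r ≤ s) (hsq : s ≤ q)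
    (hsum : p + q = r + s) :
    (3/16 : ℝ) * ((p:ℝ))⁻¹ ^ 4 ≤ lamP p + lamP q - lamP r - lamP s := by
  have hP : (3:ℝ) ≤ (p:ℝ) := by exact_mod_cast hp
  have hPR : (p:ℝ) + 1 ≤ (r:ℝ) := by exact_mod_cast hpr
  have hRS : (r:ℝ) ≤ (s:ℝ) := by exact_mod_cast hrs
  have hSQ : (s:ℝ) ≤ (q:ℝ) := by exact_mod_cast hsq
  have hsumR : (p:ℝ) + (q:ℝ) = (r:ℝ) + (s:ℝ) := by exact_mod_cast hsum
  set P := (p:ℝ)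
  set Q := (q:ℝ)
  set R := (r:ℝ)
  set S := (s:ℝ)
  have hR : 4 ≤ R := by linarith
  have hS : 4 ≤ S := by linarith
  have hQ : 4 ≤ Q := by linarith
  have hdp : (0:ℝ) < P^2 - 4 := by nlinarith
  have hdq : (0:ℝ) < Q^2 - 4 := by nlinarith
  have hdr : (0:ℝ) < R^2 - 4 := by nlinarith
  have hds : (0:ℝ) < S^2 - 4 := by nlinarith
  have hid : lamP p + lamP q - lamP r - lamP s =
      3*((R-P)*((Q-R)*(((P+Q)^2-8)*(P*Q+R*S) - 2*(P*Q)*(R*S) - 32))) /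
        ((P^2-4)*(Q^2-4)*(R^2-4)*(S^2-4)) := by
    simp only [lamP]
    exact real_id P Q R S (ne_of_gt hdp) (ne_of_gt hdq) (ne_of_gt hdr) (ne_of_gt hds)
      (by linarith)
  rw [hid]
  set B := ((P+Q)^2-8)*(P*Q+R*S) - 2*(P*Q)*(R*S) - 32 with hBdef
  have h1 : 4*(R*S) ≤ (P+Q)^2 := by nlinarith [sq_nonneg (R-S)]
  have hRS16 : 16 ≤ R*S := by nlinarith
  have hPQ : 0 < P*Q := by nlinarith
  have hBlow : R*S*Q^2/4 ≤ B := by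
    have hX : 2 ≤ (P+Q)^2 - 8 - Q^2/4 := by
      nlinarith [mul_le_mul_of_nonneg_right hP (by linarith : (0:ℝ) ≤ Q), sq_nonneg Q]
    have t1 : 0 ≤ P*Q*((P+Q)^2-8-2*(R*S)) := mul_nonneg (le_of_lt hPQ) (by nlinarith)
    have t2 : (32:ℝ) ≤ R*S*((P+Q)^2 - 8 - Q^2/4) :=
      le_trans (by norm_num) (mul_le_mul hRS16 hX (by norm_num) (by nlinarith))
    rw [hBdef]; nlinarith [t1, t2]
  have hab : R*S ≤ 4*P^2*((R-P)*(Q-R)) := by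
    have ha : 1 ≤ R - P := by linarith
    have hb : 1 ≤ Q - R := by linarith
    have hR2 : R ≤ 2*(R-P)*P := by nlinarith
    have hS2 : S ≤ 2*(Q-R)*P := by nlinarith
    have := mul_le_mul hR2 hS2 (by linarith) (by nlinarith)
    nlinarith [this]
  have habpos : 0 < (R-P)*(Q-R) := mul_pos (by linarith) (by linarith)
  have hBpos : 0 < B := lt_of_lt_of_le (by positivity) hBlow
  have hP0 : 0 < P := by linarith
  have habdiv : R*S/(4*P^2) ≤ (R-P)*(Q-R) := by
    rw [div_le_iff₀ (by positivity)]; nlinarith [hab]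
  have hNum : R*S/(4*P^2) * (R*S*Q^2/4) ≤ (R-P)*((Q-R)*B) := by
    have := mul_le_mul habdiv hBlow (by positivity) (le_of_lt habpos)
    nlinarith [this]
  have hDle : (P^2-4)*(Q^2-4)*(R^2-4)*(S^2-4) ≤ P^2*Q^2*R^2*S^2 := by
    have e1 : P^2-4 ≤ P^2 := by linarith
    have e2 : Q^2-4 ≤ Q^2 := by linarith
    have e3 : R^2-4 ≤ R^2 := by linarith
    have e4 : S^2-4 ≤ S^2 := by linarith
    gcongr <;> positivity
  have hDpos : (0:ℝ) < (P^2-4)*(Q^2-4)*(R^2-4)*(S^2-4) := by positivity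
  calc (3/16 : ℝ) * (P⁻¹)^4
      = 3*(R*S/(4*P^2) * (R*S*Q^2/4)) / (P^2*Q^2*R^2*S^2) := by
        field_simp; ring
    _ ≤ 3*((R-P)*((Q-R)*B)) / (P^2*Q^2*R^2*S^2) := by gcongr
    _ ≤ 3*((R-P)*((Q-R)*B)) / ((P^2-4)*(Q^2-4)*(R^2-4)*(S^2-4)) := by
        have hN : (0:ℝ) < (R-P)*((Q-R)*B) := by rw [← mul_assoc]; exact mul_pos habpos hBpos
        exact div_le_div_of_nonneg_left (by linarith) hDpos hDle

lemma key2 (p q r s : ℤ) (hp : 3 ≤ p) (hq : 3 ≤ q) (hr : 3 ≤ r) (hs : 3 ≤ s)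
    (hpq : p ≤ q) (hrs : r ≤ s) (hsum : p + q = r + s) (hne : p * q ≠ r * s) :
    (1/100:ℝ) * (((min (min p q) (min r s) : ℤ) : ℝ))⁻¹ ^ 4 ≤
      |lamP p + lamP q - lamP r - lamP s| := by
  rw [min_eq_left hpq, min_eq_left hrs]
  rcases le_total p r with h | h
  · have hne' : p ≠ r := by
      intro e; subst e
      have : q = s := by omega
      subst this; exact hne rfl
    have hpr : p < r := lt_of_le_of_ne h hne'
    rw [min_eq_left h]
    have hk := key_sorted p q r s hp hpr hrs (by omega) hsum
    have hppos : (0:ℝ) < ((p:ℝ))⁻¹ ^ 4 := by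
      have : (0:ℝ) < (p:ℝ) := by exact_mod_cast (by omega : (0:ℤ) < p)
      positivity
    calc (1/100:ℝ) * ((p:ℝ))⁻¹ ^ 4 ≤ (3/16:ℝ) * ((p:ℝ))⁻¹ ^ 4 := by nlinarith
      _ ≤ lamP p + lamP q - lamP r - lamP s := hk
      _ ≤ |lamP p + lamP q - lamP r - lamP s| := le_abs_self _
  · have hne' : r ≠ p := by
      intro e; subst e
      have : q = s := by omega
      subst this; exact hne rfl
    have hrp : r < p := lt_of_le_of_ne h hne'
    rw [min_eq_right h]
    have hk := key_sorted r s p q hr hrp hpq (by omega) (by omega)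
    have hppos : (0:ℝ) < ((r:ℝ))⁻¹ ^ 4 := by
      have : (0:ℝ) < (r:ℝ) := by exact_mod_cast (by omega : (0:ℤ) < r)
      positivity
    calc (1/100:ℝ) * ((r:ℝ))⁻¹ ^ 4 ≤ (3/16:ℝ) * ((r:ℝ))⁻¹ ^ 4 := by nlinarith
      _ ≤ lamP r + lamP s - lamP p - lamP q := hk
      _ = -(lamP p + lamP q - lamP r - lamP s) := by ring
      _ ≤ |lamP p + lamP q - lamP r - lamP s| := neg_le_abs _

lemma key_s6 (p q r s : ℤ) (hp : 3 ≤ p) (hq : 3 ≤ q) (hr : 3 ≤ r) (hs : 3 ≤ s)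
    (hsum : p + q = r + s) (hne : p * q ≠ r * s) :
    (1/100:ℝ) * (((min (min p q) (min r s) : ℤ) : ℝ))⁻¹ ^ 4 ≤
      |lamP p + lamP q - lamP r - lamP s| := by
  rcases le_total p q with h1 | h1 <;> rcases le_total r s with h2 | h2
  · exact key2 p q r s hp hq hr hs h1 h2 hsum hne
  · have h := key2 p q s r hp hq hs hr h1 h2 (by omega) (by rw [mul_comm s r]; exact hne)
    rw [min_comm s r] at h
    rw [show lamP p + lamP q - lamP s - lamP r = lamP p + lamP q - lamP r - lamP s from by
      ring] at h
    exact h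
  · have h := key2 q p r s hq hp hr hs h1 h2 (by omega) (by rw [mul_comm q p]; exact hne)
    rw [min_comm q p] at h
    rw [show lamP q + lamP p - lamP r - lamP s = lamP p + lamP q - lamP r - lamP s from by
      ring] at h
    exact h
  · have h := key2 q p s r hq hp hs hr h1 h2 (by omega)
      (by rw [mul_comm q p, mul_comm s r]; exact hne)
    rw [min_comm q p, min_comm s r] at h
    rw [show lamP q + lamP p - lamP s - lamP r = lamP p + lamP q - lamP r - lamP s from by
      ring] at h
    exact h

lemma bal_case (a b c d : ℤ) (ha : 3 ≤ a) (hb : 3 ≤ b) (hc : c ≤ -3) (hd : d ≤ -3)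
    (hsum : a + b + c + d = 0) (hnd : ¬ TotallyDegenerate a b c d) :
    (1/100:ℝ) * (((min (min |a| |b|) (min |c| |d|) : ℤ) : ℝ))⁻¹ ^ 4 ≤
      |lam a + lam b + lam c + lam d| := by
  have hne : a * b ≠ (-c) * (-d) := by
    intro h
    rcases degen_of a b (-c) (-d) (by omega) h with ⟨e1, e2⟩ | ⟨e1, e2⟩
    · exact hnd ⟨a, b, by
        rw [show c = -a from by omega, show d = -b from by omega]
        exact swap23 _ _ _ _⟩
    · exact hnd ⟨a, b, by
        rw [show c = -b from by omega, show d = -a from by omega]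
        exact (swap34 _ _ _ _).trans (swap23 _ _ _ _)⟩
  have h := key_s6 a b (-c) (-d) ha hb (by omega) (by omega) (by omega) hne
  rw [abs_of_nonneg (by omega : (0:ℤ) ≤ a), abs_of_nonneg (by omega : (0:ℤ) ≤ b),
      abs_of_nonpos (by omega : c ≤ 0), abs_of_nonpos (by omega : d ≤ 0),
      lam_of_pos_s6 ha, lam_of_pos_s6 hb, lam_of_neg hc, lam_of_neg hd]
  rw [show lamP a + lamP b + -lamP (-c) + -lamP (-d)
      = lamP a + lamP b - lamP (-c) - lamP (-d) from by ring]
  exact h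

/-- Quantitative non-resonance for non-degenerate 4-wave interactions:
|λ(n₁)+λ(n₂)+λ(n₃)+λ(n₄)| ≳ min(|n₁|,…,|n₄|)⁻⁴. -/
theorem stmt6 :
    ∃ c : ℝ, 0 < c ∧ ∀ n₁ n₂ n₃ n₄ : ℤ,
      3 ≤ |n₁| → 3 ≤ |n₂| → 3 ≤ |n₃| → 3 ≤ |n₄| →
      n₁ + n₂ + n₃ + n₄ = 0 → ¬ TotallyDegenerate n₁ n₂ n₃ n₄ →
      c * (((min (min |n₁| |n₂|) (min |n₃| |n₄|) : ℤ) : ℝ))⁻¹ ^ 4 ≤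
        |lam n₁ + lam n₂ + lam n₃ + lam n₄| := by
  refine ⟨1/100, by norm_num, ?_⟩
  intro n₁ n₂ n₃ n₄ h1 h2 h3 h4 hsum hnd
  have hmin3 : 3 ≤ min (min |n₁| |n₂|) (min |n₃| |n₄|) := le_min (le_min h1 h2) (le_min h3 h4)
  rcases le_abs.mp h1 with p1 | p1 <;> rcases le_abs.mp h2 with p2 | p2 <;>
    rcases le_abs.mp h3 with p3 | p3 <;> rcases le_abs.mp h4 with p4 | p4
  -- 1: PPPP
  · omega
  -- 2: PPPN
  · refine easy_bound _ hmin3 _ ?_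
    rw [lam_of_pos_s6 p1, lam_of_pos_s6 p2, lam_of_pos_s6 p3, lam_of_neg (by omega),
        show -n₄ = n₁ + n₂ + n₃ from by omega]
    calc (1:ℝ) ≤ lamP n₁ + lamP n₂ + lamP n₃ - lamP (n₁+n₂+n₃) := helper_unb _ _ _ p1 p2 p3
      _ = lamP n₁ + lamP n₂ + lamP n₃ + -lamP (n₁+n₂+n₃) := by ring
      _ ≤ |lamP n₁ + lamP n₂ + lamP n₃ + -lamP (n₁+n₂+n₃)| := le_abs_self _
  -- 3: PPNP
  · refine easy_bound _ hmin3 _ ?_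
    rw [lam_of_pos_s6 p1, lam_of_pos_s6 p2, lam_of_neg (by omega), lam_of_pos_s6 p4,
        show -n₃ = n₁ + n₂ + n₄ from by omega]
    calc (1:ℝ) ≤ lamP n₁ + lamP n₂ + lamP n₄ - lamP (n₁+n₂+n₄) := helper_unb _ _ _ p1 p2 p4
      _ = lamP n₁ + lamP n₂ + -lamP (n₁+n₂+n₄) + lamP n₄ := by ring
      _ ≤ |lamP n₁ + lamP n₂ + -lamP (n₁+n₂+n₄) + lamP n₄| := le_abs_self _
  -- 4: PPNN (balanced)
  · exact bal_case n₁ n₂ n₃ n₄ p1 p2 (by omega) (by omega) hsum hnd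
  -- 5: PNPP
  · refine easy_bound _ hmin3 _ ?_
    rw [lam_of_pos_s6 p1, lam_of_neg (by omega), lam_of_pos_s6 p3, lam_of_pos_s6 p4,
        show -n₂ = n₁ + n₃ + n₄ from by omega]
    calc (1:ℝ) ≤ lamP n₁ + lamP n₃ + lamP n₄ - lamP (n₁+n₃+n₄) := helper_unb _ _ _ p1 p3 p4
      _ = lamP n₁ + -lamP (n₁+n₃+n₄) + lamP n₃ + lamP n₄ := by ring
      _ ≤ |lamP n₁ + -lamP (n₁+n₃+n₄) + lamP n₃ + lamP n₄| := le_abs_self _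
  -- 6: PNPN (balanced)
  · have h := bal_case n₁ n₃ n₂ n₄ p1 p3 (by omega) (by omega) (by omega)
      (fun td => hnd (td_congr (swap23 _ _ _ _) td))
    rw [min_min_min_comm] at h
    rw [show lam n₁ + lam n₃ + lam n₂ + lam n₄
        = lam n₁ + lam n₂ + lam n₃ + lam n₄ from by ring] at h
    exact h
  -- 7: PNNP (balanced)
  · have h := bal_case n₁ n₄ n₂ n₃ p1 p4 (by omega) (by omega) (by omega)
      (fun td => hnd (td_congr ((swap34 _ _ _ _).trans (swap23 _ _ _ _)) td))
    rw [min_min_min_comm, min_comm |n₄| |n₃|] at h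
    rw [show lam n₁ + lam n₄ + lam n₂ + lam n₃
        = lam n₁ + lam n₂ + lam n₃ + lam n₄ from by ring] at h
    exact h
  -- 8: PNNN
  · refine easy_bound _ hmin3 _ ?_
    rw [lam_of_pos_s6 p1, lam_of_neg (by omega), lam_of_neg (by omega), lam_of_neg (by omega),
        show n₁ = -n₂ + -n₃ + -n₄ from by omega]
    calc (1:ℝ) ≤ lamP (-n₂) + lamP (-n₃) + lamP (-n₄) - lamP (-n₂ + -n₃ + -n₄) :=
          helper_unb _ _ _ (by omega) (by omega) (by omega)
      _ = -(lamP (-n₂ + -n₃ + -n₄) + -lamP (-n₂) + -lamP (-n₃) + -lamP (-n₄)) := by ring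
      _ ≤ |lamP (-n₂ + -n₃ + -n₄) + -lamP (-n₂) + -lamP (-n₃) + -lamP (-n₄)| := neg_le_abs _
  -- 9: NPPP
  · refine easy_bound _ hmin3 _ ?_
    rw [lam_of_neg (by omega), lam_of_pos_s6 p2, lam_of_pos_s6 p3, lam_of_pos_s6 p4,
        show -n₁ = n₂ + n₃ + n₄ from by omega]
    calc (1:ℝ) ≤ lamP n₂ + lamP n₃ + lamP n₄ - lamP (n₂+n₃+n₄) := helper_unb _ _ _ p2 p3 p4
      _ = -lamP (n₂+n₃+n₄) + lamP n₂ + lamP n₃ + lamP n₄ := by ring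
      _ ≤ |-lamP (n₂+n₃+n₄) + lamP n₂ + lamP n₃ + lamP n₄| := le_abs_self _
  -- 10: NPPN (balanced)
  · have h := bal_case n₂ n₃ n₁ n₄ p2 p3 (by omega) (by omega) (by omega)
      (fun td => hnd (td_congr ((swap12 _ _ _ _).trans (swap23 _ _ _ _)) td))
    rw [min_min_min_comm, min_comm |n₂| |n₁|] at h
    rw [show lam n₂ + lam n₃ + lam n₁ + lam n₄
        = lam n₁ + lam n₂ + lam n₃ + lam n₄ from by ring] at h
    exact h
  -- 11: NPNP (balanced)
  · have h := bal_case n₂ n₄ n₁ n₃ p2 p4 (by omega) (by omega) (by omega)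
      (fun td => hnd (td_congr (((swap12 _ _ _ _).trans (swap34 _ _ _ _)).trans
        (swap23 _ _ _ _)) td))
    rw [min_min_min_comm, min_comm |n₂| |n₁|, min_comm |n₄| |n₃|] at h
    rw [show lam n₂ + lam n₄ + lam n₁ + lam n₃
        = lam n₁ + lam n₂ + lam n₃ + lam n₄ from by ring] at h
    exact h
  -- 12: NPNN
  · refine easy_bound _ hmin3 _ ?_
    rw [lam_of_neg (by omega), lam_of_pos_s6 p2, lam_of_neg (by omega), lam_of_neg (by omega),
        show n₂ = -n₁ + -n₃ + -n₄ from by omega]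
    calc (1:ℝ) ≤ lamP (-n₁) + lamP (-n₃) + lamP (-n₄) - lamP (-n₁ + -n₃ + -n₄) :=
          helper_unb _ _ _ (by omega) (by omega) (by omega)
      _ = -(-lamP (-n₁) + lamP (-n₁ + -n₃ + -n₄) + -lamP (-n₃) + -lamP (-n₄)) := by ring
      _ ≤ |-lamP (-n₁) + lamP (-n₁ + -n₃ + -n₄) + -lamP (-n₃) + -lamP (-n₄)| := neg_le_abs _
  -- 13: NNPP (balanced)
  · have h := bal_case n₃ n₄ n₁ n₂ p3 p4 (by omega) (by omega) (by omega)
      (fun td => hnd (td_congr ((((swap23 _ _ _ _).trans (swap12 _ _ _ _)).trans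
        (swap34 _ _ _ _)).trans (swap23 _ _ _ _)) td))
    rw [min_comm (min |n₃| |n₄|) (min |n₁| |n₂|)] at h
    rw [show lam n₃ + lam n₄ + lam n₁ + lam n₂
        = lam n₁ + lam n₂ + lam n₃ + lam n₄ from by ring] at h
    exact h
  -- 14: NNPN
  · refine easy_bound _ hmin3 _ ?_
    rw [lam_of_neg (by omega), lam_of_neg (by omega), lam_of_pos_s6 p3, lam_of_neg (by omega),
        show n₃ = -n₁ + -n₂ + -n₄ from by omega]
    calc (1:ℝ) ≤ lamP (-n₁) + lamP (-n₂) + lamP (-n₄) - lamP (-n₁ + -n₂ + -n₄) :=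
          helper_unb _ _ _ (by omega) (by omega) (by omega)
      _ = -(-lamP (-n₁) + -lamP (-n₂) + lamP (-n₁ + -n₂ + -n₄) + -lamP (-n₄)) := by ring
      _ ≤ |-lamP (-n₁) + -lamP (-n₂) + lamP (-n₁ + -n₂ + -n₄) + -lamP (-n₄)| := neg_le_abs _
  -- 15: NNNP
  · refine easy_bound _ hmin3 _ ?_
    rw [lam_of_neg (by omega), lam_of_neg (by omega), lam_of_neg (by omega), lam_of_pos_s6 p4,
        show n₄ = -n₁ + -n₂ + -n₃ from by omega]
    calc (1:ℝ) ≤ lamP (-n₁) + lamP (-n₂) + lamP (-n₃) - lamP (-n₁ + -n₂ + -n₃) :=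
          helper_unb _ _ _ (by omega) (by omega) (by omega)
      _ = -(-lamP (-n₁) + -lamP (-n₂) + -lamP (-n₃) + lamP (-n₁ + -n₂ + -n₃)) := by ring
      _ ≤ |-lamP (-n₁) + -lamP (-n₂) + -lamP (-n₃) + lamP (-n₁ + -n₂ + -n₃)| := neg_le_abs _
  -- 16: NNNN
  · omega
end

section
/- Let p ≥ 4 be an even integer and let D_p ⊂ ℤ^p be the set of totally degenerate tuples, i.e., tuples (n₁,…,n_p) for which there exists a fixed-point-free involution σ of {1,…,p} with n_{σ(j)} = −n_j for all j. Let m : A_p → ℂ be of class M_p^{μ,ν}. Then the function m·𝟙_{D_p} (equal to m on A_p ∩ D_p and to 0 on A_p \ D_p) is again of class M_p^{μ,ν}; moreover if m is of class M_{p+}^{μ,ν} (resp. M_{p−}^{μ,ν}) then so is m·𝟙_{D_p}. In particular, m ↦ m·𝟙_{D_p} is a linear projection preserving the class and the parity. -/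
/-- A_p = {(n₁,…,n_p) ∈ ℤ^p : n₁+⋯+n_p = 0 and |n_j| ≥ 3 for all j}. -/
def Ap (p : ℕ) (v : Fin p → ℤ) : Prop := (∑ i, v i) = 0 ∧ ∀ i, 3 ≤ |v i|

/-- The list |n₁|,…,|n_p| sorted in decreasing order. -/
def sortedAbs {p : ℕ} (v : Fin p → ℤ) : List ℤ :=
  List.insertionSort (fun a b => b ≤ a) (List.ofFn fun i => |v i|)

/-- N = the largest among |n₁|,…,|n_p|. -/
def bigN {p : ℕ} (v : Fin p → ℤ) : ℤ := (sortedAbs v).getD 0 0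

/-- n = the third largest among |n₁|,…,|n_p|. -/
def thirdN {p : ℕ} (v : Fin p → ℤ) : ℤ := (sortedAbs v).getD 2 0

/-- The tuple (n₁,…,n_j+x,…,n_k−x,…,n_p). -/
def shiftT {p : ℕ} (v : Fin p → ℤ) (j k : Fin p) (x : ℤ) : Fin p → ℤ :=
  fun i => if i = j then v i + x else if i = k then v i - x else v i

/-- Iterated unit forward difference Δ^q. -/
def itDiff : ℕ → (ℤ → ℂ) → ℤ → ℂ
  | 0, g => g
  | q + 1, g => fun x => itDiff q g (x + 1) - itDiff q g x

/-- The class M_p^{μ,ν}: (i) |m| ≤ C₀·N^μ·n^{ν(0)} on A_p, and (ii) for every q ≥ 1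
there are δ_q, C_q > 0 such that the q-th iterated difference of m in the directions
e_j − e_k is O(N^{μ−q}·n^{ν(q)}) whenever n < δ_q·N, n < |n_j|, n < |n_k| (with all
shifted tuples remaining in A_p). -/
def MClass (p : ℕ) (μ : ℝ) (ν : ℕ → ℝ) (m : (Fin p → ℤ) → ℂ) : Prop :=
  (∃ C₀ : ℝ, 0 < C₀ ∧ ∀ v : Fin p → ℤ, Ap p v →
      ‖m v‖ ≤ C₀ * (bigN v : ℝ) ^ μ * (thirdN v : ℝ) ^ ν 0) ∧
  ∀ q : ℕ, 1 ≤ q → ∃ δ C : ℝ, 0 < δ ∧ 0 < C ∧ ∀ v : Fin p → ℤ, Ap p v →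
    ∀ j k : Fin p, j ≠ k → (thirdN v : ℝ) < δ * (bigN v : ℝ) →
    thirdN v < |v j| → thirdN v < |v k| →
    (∀ x : ℤ, 0 ≤ x → x ≤ (q : ℤ) → Ap p (shiftT v j k x)) →
    ‖itDiff q (fun x => m (shiftT v j k x)) 0‖ ≤
      C * (bigN v : ℝ) ^ (μ - (q : ℝ)) * (thirdN v : ℝ) ^ ν q

/-- Even parity on A_p: m(−n₁,…,−n_p) = m(n₁,…,n_p). -/
def EvenPar (p : ℕ) (m : (Fin p → ℤ) → ℂ) : Prop :=
  ∀ v : Fin p → ℤ, Ap p v → m (fun i => -(v i)) = m v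

/-- Odd parity on A_p: m(−n₁,…,−n_p) = −m(n₁,…,n_p). -/
def OddPar (p : ℕ) (m : (Fin p → ℤ) → ℂ) : Prop :=
  ∀ v : Fin p → ℤ, Ap p v → m (fun i => -(v i)) = -m v

/-- D_p = totally degenerate tuples: there is a fixed-point-free involution σ of
{1,…,p} with n_{σ(j)} = −n_j for all j. -/
def Dp (p : ℕ) (v : Fin p → ℤ) : Prop :=
  ∃ σ : Equiv.Perm (Fin p), (∀ j, σ (σ j) = j) ∧ (∀ j, σ j ≠ j) ∧ ∀ j, v (σ j) = -(v j)
/-! In the regime `n < N / (q + 1)` the entries `n_j`, `n_k` are the only ones larger than `n`, and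
the larger of them exceeds `n + q`. A fixed-point-free antipodal involution of any shifted tuple
`shiftT v j k x` (`0 ≤ x ≤ q`) must then pair `j` with `k`, and such pairings survive every shift
along `e_j - e_k`. So membership in `D_p` is constant along the `q + 1` tuples entering the `q`-th
difference, which is therefore that of `m` or zero. Size bound and parity are immediate, `D_p`
being invariant under negation. -/

open Finset

theorem List.Pairwise.countP_lt_getElem_le {α : Type*} [LinearOrder α] {l : List α}
    (hl : l.Pairwise (· ≥ ·)) {r : ℕ} (hr : r < l.length) :
    l.countP (fun a => l[r] < a) ≤ r := by
  have hsplit := @List.countP_append _ (fun a => l[r] < a) (l.take r) (l.drop r)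
  rw [List.take_append_drop] at hsplit
  have hdrop : (l.drop r).countP (fun a => l[r] < a) = 0 := by
    refine List.countP_eq_zero.2 fun a ha => ?_
    obtain ⟨b, hb, rfl⟩ := List.getElem_of_mem ha
    rw [List.getElem_drop, decide_eq_true_eq, not_lt]
    rcases Nat.eq_zero_or_pos b with rfl | hb0
    · simp
    · rw [List.length_drop] at hb
      exact List.pairwise_iff_getElem.1 hl r (r + b) hr (by omega) (by omega)
  have htake : (l.take r).countP (fun a => l[r] < a) ≤ r :=
    List.countP_le_length.trans (List.length_take_le _ _)
  omega

section SortedAbs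

variable {p : ℕ} (v : Fin p → ℤ)

theorem length_sortedAbs : (sortedAbs v).length = p := by
  simp [sortedAbs]

theorem pairwise_sortedAbs : (sortedAbs v).Pairwise (· ≥ ·) :=
  List.pairwise_insertionSort _ _

theorem mem_sortedAbs {a : ℤ} : a ∈ sortedAbs v ↔ ∃ i, |v i| = a := by
  simp [sortedAbs, (List.perm_insertionSort _ _).mem_iff, List.mem_ofFn]

theorem exists_abs_eq_getD_sortedAbs {r : ℕ} (hr : r < p) :
    ∃ i, |v i| = (sortedAbs v).getD r 0 := by
  rw [List.getD_eq_getElem _ _ (by rwa [length_sortedAbs]), ← mem_sortedAbs]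
  exact List.getElem_mem _

theorem exists_abs_eq_bigN (hp : 0 < p) : ∃ i, |v i| = bigN v :=
  exists_abs_eq_getD_sortedAbs v hp

theorem exists_abs_eq_thirdN (hp : 3 ≤ p) : ∃ i, |v i| = thirdN v :=
  exists_abs_eq_getD_sortedAbs v hp

theorem countP_sortedAbs (P : ℤ → Bool) :
    (sortedAbs v).countP P = #{i | P |v i|} := by
  rw [sortedAbs, (List.perm_insertionSort _ _).countP_eq, card_def, filter_val,
    ← Multiset.countP_map (fun i => |v i|) _ (fun a => P a), Fin.univ_val_map,
    Multiset.coe_countP]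
  simp

theorem card_lt_abs_thirdN_le_two (hp : 3 ≤ p) : #{i | thirdN v < |v i|} ≤ 2 := by
  have h := (pairwise_sortedAbs v).countP_lt_getElem_le (r := 2)
    (by rw [length_sortedAbs]; omega)
  rw [countP_sortedAbs, ← List.getD_eq_getElem _ 0] at h
  simpa [thirdN] using h

end SortedAbs

theorem abs_le_thirdN_of_ne {p : ℕ} (hp : 3 ≤ p) {v : Fin p → ℤ} {i j k : Fin p}
    (hjk : j ≠ k) (hij : i ≠ j) (hik : i ≠ k) (hj : thirdN v < |v j|) (hk : thirdN v < |v k|) :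
    |v i| ≤ thirdN v := by
  by_contra! hi
  have hsub : ({i, j, k} : Finset (Fin p)) ⊆ ({l | thirdN v < |v l|} : Finset (Fin p)) := by
    simp [insert_subset_iff, hi, hj, hk]
  have := (card_le_card hsub).trans (card_lt_abs_thirdN_le_two v hp)
  rw [card_insert_of_notMem (by simp [hij, hik]), card_pair hjk] at this
  omega

theorem Ap.three_le_bigN {p : ℕ} {v : Fin p → ℤ} (hv : Ap p v) (hp : 0 < p) : 3 ≤ bigN v :=
  let ⟨i, hi⟩ := exists_abs_eq_bigN v hp
  hi ▸ hv.2 i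

theorem Ap.three_le_thirdN {p : ℕ} {v : Fin p → ℤ} (hv : Ap p v) (hp : 3 ≤ p) : 3 ≤ thirdN v :=
  let ⟨i, hi⟩ := exists_abs_eq_thirdN v hp
  hi ▸ hv.2 i

theorem Ap.neg {p : ℕ} {v : Fin p → ℤ} (hv : Ap p v) : Ap p (fun i => -(v i)) :=
  ⟨by rw [sum_neg_distrib, hv.1, neg_zero], fun i => by simpa using hv.2 i⟩

section ShiftT

variable {p : ℕ} (v : Fin p → ℤ) (j k : Fin p)

@[simp]
theorem shiftT_zero : shiftT v j k 0 = v := by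
  ext i
  simp [shiftT]

theorem shiftT_shiftT (x y : ℤ) : shiftT (shiftT v j k x) j k y = shiftT v j k (x + y) := by
  ext i
  simp only [shiftT]
  split_ifs <;> ring

theorem abs_le_abs_shiftT_add (x : ℤ) (i : Fin p) : |v i| ≤ |shiftT v j k x i| + |x| := by
  simp only [shiftT]
  split_ifs
  · simpa using abs_sub (v i + x) x
  · simpa using abs_add_le (v i - x) x
  · simp

end ShiftT

def IsAntipodalPairing {p : ℕ} (σ : Equiv.Perm (Fin p)) (v : Fin p → ℤ) : Prop :=
  (∀ j, σ (σ j) = j) ∧ (∀ j, σ j ≠ j) ∧ ∀ j, v (σ j) = -(v j)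

theorem dp_iff_exists_isAntipodalPairing {p : ℕ} {v : Fin p → ℤ} :
    Dp p v ↔ ∃ σ, IsAntipodalPairing σ v :=
  Iff.rfl

namespace IsAntipodalPairing

variable {p : ℕ} {σ : Equiv.Perm (Fin p)} {v : Fin p → ℤ} {j k : Fin p}

theorem shiftT (h : IsAntipodalPairing σ v) (hσ : σ j = k) (x : ℤ) :
    IsAntipodalPairing σ (shiftT v j k x) := by
  obtain ⟨hinv, hfix, hneg⟩ := h
  have hσk : σ k = j := hσ ▸ hinv j
  have hjk : j ≠ k := hσ ▸ (hfix j).symm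
  have hvk : v k = -v j := hσ ▸ hneg j
  refine ⟨hinv, hfix, fun i => ?_⟩
  by_cases hij : i = j
  · subst hij
    simp only [_root_.shiftT, hσ, hjk.symm, ↓reduceIte, hvk, neg_add_rev]
    ring
  by_cases hik : i = k
  · subst hik
    simp only [_root_.shiftT, hσk, ↓reduceIte, hjk.symm, hvk, neg_sub, sub_neg_eq_add]
    ring
  · have h1 : σ i ≠ j := fun h => hik (by rw [← hinv i, h, hσ])
    have h2 : σ i ≠ k := fun h => hij (by rw [← hinv i, h, hσk])
    simp [_root_.shiftT, h1, h2, hij, hik, hneg]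

theorem apply_eq_of_shiftT {x n : ℤ} (h : IsAntipodalPairing σ (_root_.shiftT v j k x))
    (hsmall : ∀ i, i ≠ j → i ≠ k → |v i| ≤ n) (hbig : ∃ i, n + |x| < |v i|) : σ j = k := by
  obtain ⟨hinv, hfix, hneg⟩ := h
  by_contra hne
  obtain ⟨i, hi⟩ := hbig
  have hσi : σ i ≠ j ∧ σ i ≠ k := by
    by_cases hij : i = j
    · subst hij
      exact ⟨hfix i, hne⟩
    by_cases hik : i = k
    · subst hik
      exact ⟨fun h => hne (h ▸ hinv i), hfix i⟩
    · exact absurd (hsmall i hij hik) (by linarith [abs_nonneg x])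
  have : |v i| ≤ n + |x| := calc
    |v i| ≤ |_root_.shiftT v j k x i| + |x| := abs_le_abs_shiftT_add v j k x i
    _ = |v (σ i)| + |x| := by
      rw [← abs_neg, ← hneg, _root_.shiftT, if_neg hσi.1, if_neg hσi.2]
    _ ≤ n + |x| := by gcongr; exact hsmall _ hσi.1 hσi.2
  linarith

end IsAntipodalPairing

theorem dp_shiftT_iff {p : ℕ} {v : Fin p → ℤ} {j k : Fin p} {x n : ℤ}
    (hsmall : ∀ i, i ≠ j → i ≠ k → |v i| ≤ n) (hbig : ∃ i, n + |x| < |v i|) :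
    Dp p (shiftT v j k x) ↔ Dp p v := by
  simp only [dp_iff_exists_isAntipodalPairing]
  constructor
  · rintro ⟨σ, hσ⟩
    have h := hσ.shiftT (hσ.apply_eq_of_shiftT hsmall hbig) (-x)
    rw [shiftT_shiftT, add_neg_cancel, shiftT_zero] at h
    exact ⟨σ, h⟩
  · rintro ⟨σ, hσ⟩
    have hσ₀ : IsAntipodalPairing σ (shiftT v j k 0) := by rwa [shiftT_zero]
    have hbig₀ : ∃ i, n + |0| < |v i| := by
      obtain ⟨i, hi⟩ := hbig
      exact ⟨i, by linarith [abs_nonneg x, abs_zero (α := ℤ)]⟩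
    exact ⟨σ, hσ.shiftT (hσ₀.apply_eq_of_shiftT hsmall hbig₀) x⟩

theorem dp_shiftT_iff_of_thirdN_mul_lt {p : ℕ} (hp : 3 ≤ p) {v : Fin p → ℤ} (hv : Ap p v)
    {j k : Fin p} (hjk : j ≠ k) (hj : thirdN v < |v j|) (hk : thirdN v < |v k|) {q : ℕ}
    (hreg : thirdN v * (q + 1) < bigN v) {x : ℤ} (hx₀ : 0 ≤ x) (hxq : x ≤ q) :
    Dp p (shiftT v j k x) ↔ Dp p v := by
  refine dp_shiftT_iff (fun i hij hik => abs_le_thirdN_of_ne hp hjk hij hik hj hk) ?_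
  obtain ⟨i, hi⟩ := exists_abs_eq_bigN v (by omega)
  have hn : 3 ≤ thirdN v := hv.three_le_thirdN hp
  refine ⟨i, ?_⟩
  rw [hi, abs_of_nonneg hx₀]
  nlinarith

theorem itDiff_congr {f g : ℤ → ℂ} (q : ℕ) {x : ℤ}
    (hfg : ∀ y, x ≤ y → y ≤ x + q → f y = g y) : itDiff q f x = itDiff q g x := by
  induction q generalizing x with
  | zero => exact hfg x le_rfl (by simp)
  | succ q ih =>
    simp only [itDiff]
    rw [ih fun y h₁ h₂ => hfg y (by omega) (by push_cast at h₂ ⊢; omega),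
      ih fun y h₁ h₂ => hfg y h₁ (by push_cast at h₂ ⊢; omega)]

theorem itDiff_fun_zero (q : ℕ) (x : ℤ) : itDiff q (fun _ => 0) x = 0 := by
  induction q generalizing x with
  | zero => rfl
  | succ q ih => simp [itDiff, ih]

theorem dp_neg_iff {p : ℕ} {v : Fin p → ℤ} : Dp p (fun i => -(v i)) ↔ Dp p v := by
  simp [Dp, neg_eq_iff_eq_neg]

open Classical in
def IsDpRestriction (p : ℕ) (m m' : (Fin p → ℤ) → ℂ) : Prop :=
  ∀ v, Ap p v → m' v = if Dp p v then m v else 0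

namespace IsDpRestriction

variable {p : ℕ} {m m' : (Fin p → ℤ) → ℂ}

theorem norm_le (h : IsDpRestriction p m m') {v : Fin p → ℤ} (hv : Ap p v) :
    ‖m' v‖ ≤ ‖m v‖ := by
  rw [h v hv]
  split_ifs
  exacts [le_rfl, by simp]

theorem norm_itDiff_le (h : IsDpRestriction p m m') {v : Fin p → ℤ} {j k : Fin p} {q : ℕ}
    (hA : ∀ x : ℤ, 0 ≤ x → x ≤ q → Ap p (shiftT v j k x))
    (hD : ∀ x : ℤ, 0 ≤ x → x ≤ q → (Dp p (shiftT v j k x) ↔ Dp p v)) :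
    ‖itDiff q (fun x => m' (shiftT v j k x)) 0‖ ≤
      ‖itDiff q (fun x => m (shiftT v j k x)) 0‖ := by
  classical
  have hline : ∀ y : ℤ, 0 ≤ y → y ≤ 0 + q →
      m' (shiftT v j k y) = if Dp p v then m (shiftT v j k y) else 0 := fun y hy₀ hyq => by
    rw [zero_add] at hyq
    rw [h _ (hA y hy₀ hyq)]
    exact if_congr (hD y hy₀ hyq) rfl rfl
  by_cases hv : Dp p v
  · simp only [hv, if_true] at hline
    rw [itDiff_congr q hline]
  · simp only [hv, if_false] at hline
    rw [itDiff_congr q hline, itDiff_fun_zero, norm_zero]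
    exact norm_nonneg _

theorem evenPar (h : IsDpRestriction p m m') (hm : EvenPar p m) : EvenPar p m' := by
  intro v hv
  rw [h _ hv.neg, h v hv, dp_neg_iff, hm v hv]

theorem oddPar (h : IsDpRestriction p m m') (hm : OddPar p m) : OddPar p m' := by
  intro v hv
  rw [h _ hv.neg, h v hv, dp_neg_iff, hm v hv]
  split_ifs <;> simp

end IsDpRestriction

theorem stmt10_general (p : ℕ) (hp : 4 ≤ p) (μ : ℝ) (ν : ℕ → ℝ)
    (m : (Fin p → ℤ) → ℂ) (hm : MClass p μ ν m)
    (m' : (Fin p → ℤ) → ℂ)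
    (hD : ∀ v : Fin p → ℤ, Ap p v → Dp p v → m' v = m v)
    (hDc : ∀ v : Fin p → ℤ, Ap p v → ¬ Dp p v → m' v = 0) :
    MClass p μ ν m' ∧
    (EvenPar p m → EvenPar p m') ∧
    (OddPar p m → OddPar p m') := by
  have hm' : IsDpRestriction p m m' := fun v hv => by
    split_ifs with h
    exacts [hD v hv h, hDc v hv h]
  refine ⟨⟨?_, fun q hq => ?_⟩, hm'.evenPar, hm'.oddPar⟩
  · obtain ⟨C₀, hC₀, hbd⟩ := hm.1
    exact ⟨C₀, hC₀, fun v hv => (hm'.norm_le hv).trans (hbd v hv)⟩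
  · obtain ⟨δ, C, hδ, hC, hbd⟩ := hm.2 q hq
    refine ⟨min δ ((q : ℝ) + 1)⁻¹, C, by positivity, hC, fun v hv j k hjk hreg hj hk hA => ?_⟩
    have hN : (0 : ℝ) < bigN v := Int.cast_pos.2 (by linarith [hv.three_le_bigN (by omega)])
    have hregδ : (thirdN v : ℝ) < δ * bigN v :=
      hreg.trans_le (by gcongr; exact min_le_left _ _)
    have hreg' : thirdN v * (q + 1) < bigN v := by
      have : (thirdN v : ℝ) < ((q : ℝ) + 1)⁻¹ * bigN v :=
        hreg.trans_le (by gcongr; exact min_le_right _ _)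
      rw [inv_mul_eq_div, lt_div_iff₀ (by positivity)] at this
      exact_mod_cast this
    exact (hm'.norm_itDiff_le hA fun x hx₀ hxq =>
      dp_shiftT_iff_of_thirdN_mul_lt (by omega) hv hjk hj hk hreg' hx₀ hxq).trans
      (hbd v hv j k hjk hregδ hj hk hA)

/-- Restriction to the set of totally degenerate tuples (the projection m ↦ m·𝟙_{D_p})
preserves the class M_p^{μ,ν} and the parity. -/
theorem stmt10 (p : ℕ) (hp : 4 ≤ p) (hpe : Even p) (μ : ℝ) (ν : ℕ → ℝ) (hν : Monotone ν)
    (m : (Fin p → ℤ) → ℂ) (hm : MClass p μ ν m)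
    (m' : (Fin p → ℤ) → ℂ)
    (hD : ∀ v : Fin p → ℤ, Ap p v → Dp p v → m' v = m v)
    (hDc : ∀ v : Fin p → ℤ, Ap p v → ¬ Dp p v → m' v = 0) :
    MClass p μ ν m' ∧
    (EvenPar p m → EvenPar p m') ∧
    (OddPar p m → OddPar p m') :=
  stmt10_general p hp μ ν m hm m' hD hDc
end

section
/- Let p ≥ 2 be an even integer and let D_p ⊂ ℤ^p be the set of tuples (n₁,…,n_p) for which there exists a fixed-point-free involution σ of {1,…,p} with n_{σ(j)} = −n_j for all j. Let m : ℤ^p → ℂ be odd, i.e., m(−n₁,…,−n_p) = −m(n₁,…,n_p) for all tuples, and let a : ℤ → ℂ be any sequence such that ∑_{(n₁,…,n_p)∈D_p, |n_j|≥3 ∀j} |m(n₁,…,n_p)|·|a(n₁)|⋯|a(n_p)| < ∞. Then ∑_{(n₁,…,n_p)∈D_p, |n_j|≥3 ∀j} m(n₁,…,n_p)·a(n₁)⋯a(n_p) = 0. -/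
/-- For an odd multiplier m, the (absolutely convergent) sum of m(n₁,…,n_p)·a(n₁)⋯a(n_p)
over totally degenerate tuples with all |n_j| ≥ 3 vanishes. -/
theorem stmt11 (p : ℕ) (hp : 2 ≤ p) (hpe : Even p) (m : (Fin p → ℤ) → ℂ)
    (hodd : ∀ v : Fin p → ℤ, m (fun i => -(v i)) = -m v) (a : ℤ → ℂ)
    (hsum : Summable (fun v : { v : Fin p → ℤ // Dp p v ∧ ∀ j, 3 ≤ |v j| } =>
      ‖m v.1‖ * ∏ j, ‖a (v.1 j)‖)) :
    ∑' v : { v : Fin p → ℤ // Dp p v ∧ ∀ j, 3 ≤ |v j| }, m v.1 * ∏ j, a (v.1 j) = 0 := by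
  set S := { v : Fin p → ℤ // Dp p v ∧ ∀ j, 3 ≤ |v j| }
  have hmem : ∀ v : S, Dp p (fun i => -(v.1 i)) ∧ ∀ j, 3 ≤ |(fun i => -(v.1 i)) j| := by
    rintro ⟨v, ⟨σ, h1, h2, h3⟩, hb⟩
    refine ⟨⟨σ, h1, h2, fun j => ?_⟩, fun j => by simpa using hb j⟩
    simp [h3 j]
  let e : S ≃ S :=
    { toFun := fun v => ⟨fun i => -(v.1 i), hmem v⟩
      invFun := fun v => ⟨fun i => -(v.1 i), hmem v⟩
      left_inv := fun v => by ext i; simp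
      right_inv := fun v => by ext i; simp }
  set f : S → ℂ := fun v => m v.1 * ∏ j, a (v.1 j) with hf
  have key : ∀ v : S, f (e v) = -f v := by
    rintro ⟨v, ⟨σ, h1, h2, h3⟩, hb⟩
    have hprod : (∏ j, a (-(v j))) = ∏ j, a (v j) := by
      calc (∏ j, a (-(v j))) = ∏ j, a (v (σ j)) := by
            refine Finset.prod_congr rfl fun j _ => by rw [h3 j]
        _ = ∏ j, a (v j) := Equiv.prod_comp σ (fun j => a (v j))
    show m (fun i => -(v i)) * (∏ j, a (-(v j))) = -(m v * ∏ j, a (v j))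
    rw [hodd v, hprod, neg_mul]
  have : ∑' v : S, f v = -∑' v : S, f v := by
    conv_lhs => rw [← e.tsum_eq f]
    rw [show (fun v => f (e v)) = fun v => -f v from funext key, tsum_neg]
  have h2 : (2:ℂ) • ∑' v : S, f v = 0 := by rw [two_smul]; linear_combination this
  simpa using h2
end
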